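/- arXiv:2010.03750 — 3 statements merged into one kernel-verified Lean document; each statement's English description precedes it below -/
import Mathlib

section
/- Let $Z$ be a normed space, $T>0$, $N\in\mathbb{N}$ with $N\ge 1$, $\Delta t = T/N$, and $\{z^n\}_{n=0}^N \subset Z$. Define the difference quotients $\partial z^n = (z^n - z^{n-1})/\Delta t$ for $n=1,\dots,N$. Then $\max_{0\le k\le N} \|z^k\|_Z^2 \le \frac{6\max\{1,T^2\}}{2N+1}\left( \sum_{n=0}^N \|z^n\|_Z^2 + \sum_{n=1}^N \|\partial z^n\|_Z^2 \right)$. -/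
/-!
Every `z j` lies within `D = ∑ ‖z (i + 1) - z i‖` of `z k`, so `‖z k‖² ≤ 2 ‖z j‖² + 2 D²`;
averaging over `j` produces the first sum, and Cauchy–Schwarz gives
`D² ≤ N ∑ ‖z (i + 1) - z i‖² = (T² / N) ∑ ‖dz n‖²`. Both resulting coefficients, `2 / (N + 1)`
and `2 T² / N`, are at most `6 max 1 T² / (2 N + 1)`.
-/

open Finset

theorem dist_le_sum_range_dist_succ {α : Type*} [PseudoMetricSpace α] (f : ℕ → α) {N j k : ℕ}
    (hj : j ≤ N) (hk : k ≤ N) : dist (f j) (f k) ≤ ∑ i ∈ range N, dist (f i) (f (i + 1)) := by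
  wlog hjk : j ≤ k generalizing j k
  · rw [dist_comm]
    exact this hk hj (le_of_not_ge hjk)
  calc dist (f j) (f k) ≤ ∑ i ∈ Ico j k, dist (f i) (f (i + 1)) := dist_le_Ico_sum_dist f hjk
    _ ≤ ∑ i ∈ range N, dist (f i) (f (i + 1)) := by
      refine sum_le_sum_of_subset_of_nonneg ?_ fun _ _ _ => dist_nonneg
      intro i hi
      simp only [mem_Ico, mem_range] at hi ⊢
      omega

theorem sq_norm_le_of_forall_norm_sub_le {ι E : Type*} [SeminormedAddCommGroup E] {s : Finset ι}
    (hs : s.Nonempty) {x : E} {y : ι → E} {D : ℝ} (hy : ∀ j ∈ s, ‖x - y j‖ ≤ D) :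
    ‖x‖ ^ 2 ≤ 2 / #s * ∑ j ∈ s, ‖y j‖ ^ 2 + 2 * D ^ 2 := by
  have hcard : (0 : ℝ) < #s := by exact_mod_cast hs.card_pos
  have hpoint : ∀ j ∈ s, ‖x‖ ^ 2 ≤ 2 * ‖y j‖ ^ 2 + 2 * D ^ 2 := fun j hj =>
    calc ‖x‖ ^ 2 ≤ (‖y j‖ + ‖x - y j‖) ^ 2 := by
          gcongr
          simpa using norm_le_insert' x (y j)
      _ ≤ 2 * (‖y j‖ ^ 2 + ‖x - y j‖ ^ 2) := add_sq_le
      _ ≤ 2 * ‖y j‖ ^ 2 + 2 * D ^ 2 := by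
          have : ‖x - y j‖ ^ 2 ≤ D ^ 2 := pow_le_pow_left₀ (norm_nonneg _) (hy j hj) 2
          linarith
  have hsum := card_nsmul_le_sum s _ _ hpoint
  rw [nsmul_eq_mul, sum_add_distrib, sum_const, nsmul_eq_mul, ← mul_sum] at hsum
  rw [div_mul_eq_mul_div, div_add' _ _ _ hcard.ne', le_div_iff₀ hcard]
  linarith

theorem sq_norm_le_sum_sq_norm_add_sum_sq_norm_succ_sub {E : Type*} [SeminormedAddCommGroup E]
    (z : ℕ → E) {N k : ℕ} (hk : k ≤ N) :
    ‖z k‖ ^ 2 ≤ 2 / (N + 1) * ∑ n ∈ range (N + 1), ‖z n‖ ^ 2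
      + 2 * N * ∑ i ∈ range N, ‖z (i + 1) - z i‖ ^ 2 := by
  set D := ∑ i ∈ range N, ‖z (i + 1) - z i‖
  have hdist : ∀ j ∈ range (N + 1), ‖z k - z j‖ ≤ D := fun j hj => by
    have := dist_le_sum_range_dist_succ z (Nat.lt_succ_iff.mp (mem_range.mp hj)) hk
    simpa only [dist_eq_norm', D] using this
  have hCS : D ^ 2 ≤ N * ∑ i ∈ range N, ‖z (i + 1) - z i‖ ^ 2 := by
    simpa only [card_range] using sq_sum_le_card_mul_sum_sq (s := range N)
      (f := fun i => ‖z (i + 1) - z i‖)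
  have := sq_norm_le_of_forall_norm_sub_le ⟨k, mem_range.mpr (Nat.lt_succ_of_le hk)⟩ hdist
  push_cast [card_range] at this
  linarith

theorem sum_range_succ_eq_sum_Icc {M : Type*} [AddCommMonoid M] (f : ℕ → M) (N : ℕ) :
    ∑ i ∈ range N, f (i + 1) = ∑ n ∈ Icc 1 N, f n := by
  rw [range_eq_Ico, sum_Ico_add' f 0 N 1, zero_add, Ico_add_one_right_eq_Icc]

theorem two_div_add_one_le_six_mul_max_div (T : ℝ) (N : ℕ) :
    2 / ((N : ℝ) + 1) ≤ 6 * max 1 (T ^ 2) / (2 * N + 1) := by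
  rw [div_le_div_iff₀ (by positivity) (by positivity)]
  nlinarith [le_max_left 1 (T ^ 2), (N.cast_nonneg : (0 : ℝ) ≤ N)]

-- At `N = 0` the left side is `0`, because `T / 0 = 0`.
theorem two_mul_mul_div_sq_le_six_mul_max_div (T : ℝ) (N : ℕ) :
    2 * N * (T / N) ^ 2 ≤ 6 * max 1 (T ^ 2) / (2 * N + 1) := by
  rcases Nat.eq_zero_or_pos N with rfl | hN
  · simp only [CharP.cast_eq_zero, mul_zero, zero_mul]; positivity
  have hN' : (1 : ℝ) ≤ N := by exact_mod_cast hN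
  rw [div_pow, ← mul_div_assoc, div_le_div_iff₀ (by positivity) (by positivity)]
  have hM : T ^ 2 * N ^ 2 ≤ max 1 (T ^ 2) * N ^ 2 := by gcongr; exact le_max_right _ _
  have hN0 : (0 : ℝ) ≤ N := N.cast_nonneg
  nlinarith [mul_nonneg (mul_nonneg (sq_nonneg T) hN0) (sub_nonneg.mpr hN')]

theorem stmt_0_general {Z : Type*} [NormedAddCommGroup Z] [NormedSpace ℝ Z]
    (T : ℝ) (hT : 0 < T) (N : ℕ) (Δt : ℝ) (hΔt : Δt = T / N)
    (z : ℕ → Z) (dz : ℕ → Z)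
    (hdz : ∀ n, 1 ≤ n → n ≤ N → dz n = (Δt)⁻¹ • (z n - z (n - 1))) :
    ∀ k ≤ N, ‖z k‖ ^ 2 ≤ 6 * max 1 (T ^ 2) / (2 * (N : ℝ) + 1) *
      ((∑ n ∈ Finset.range (N + 1), ‖z n‖ ^ 2) +
        ∑ n ∈ Finset.Icc 1 N, ‖dz n‖ ^ 2) := by
  intro k hk
  have hstep : ∀ n ∈ Icc 1 N, ‖z n - z (n - 1)‖ ^ 2 = Δt ^ 2 * ‖dz n‖ ^ 2 := fun n hn => by
    obtain ⟨h1, h2⟩ := mem_Icc.mp hn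
    have hΔt0 : Δt ≠ 0 := by rw [hΔt]; exact div_ne_zero hT.ne' (Nat.cast_ne_zero.mpr (by omega))
    rw [hdz n h1 h2, norm_smul, norm_inv, Real.norm_eq_abs, mul_pow, ← mul_assoc, inv_pow, sq_abs,
      mul_inv_cancel₀ (pow_ne_zero 2 hΔt0), one_mul]
  have hincr : ∑ i ∈ range N, ‖z (i + 1) - z i‖ ^ 2 = Δt ^ 2 * ∑ n ∈ Icc 1 N, ‖dz n‖ ^ 2 := by
    rw [mul_sum, ← sum_congr rfl hstep, ← sum_range_succ_eq_sum_Icc]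
    simp only [Nat.add_sub_cancel]
  calc ‖z k‖ ^ 2 ≤ 2 / (N + 1) * ∑ n ∈ range (N + 1), ‖z n‖ ^ 2
        + 2 * N * ∑ i ∈ range N, ‖z (i + 1) - z i‖ ^ 2 :=
          sq_norm_le_sum_sq_norm_add_sum_sq_norm_succ_sub z hk
    _ = 2 / (N + 1) * ∑ n ∈ range (N + 1), ‖z n‖ ^ 2
        + 2 * N * (T / N) ^ 2 * ∑ n ∈ Icc 1 N, ‖dz n‖ ^ 2 := by rw [hincr, hΔt]; ring
    _ ≤ _ := by
      rw [mul_add]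
      exact add_le_add
        (mul_le_mul_of_nonneg_right (two_div_add_one_le_six_mul_max_div T N) (by positivity))
        (mul_le_mul_of_nonneg_right (two_mul_mul_div_sq_le_six_mul_max_div T N) (by positivity))

/-- Discrete time Sobolev inequality (Lemma 3.2). -/
theorem stmt_0 {Z : Type*} [NormedAddCommGroup Z] [NormedSpace ℝ Z]
    (T : ℝ) (hT : 0 < T) (N : ℕ) (hN : 1 ≤ N) (Δt : ℝ) (hΔt : Δt = T / N)
    (z : ℕ → Z) (dz : ℕ → Z)
    (hdz : ∀ n, 1 ≤ n → n ≤ N → dz n = (Δt)⁻¹ • (z n - z (n - 1))) :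
    ∀ k ≤ N, ‖z k‖ ^ 2 ≤ 6 * max 1 (T ^ 2) / (2 * (N : ℝ) + 1) *
      ((∑ n ∈ Finset.range (N + 1), ‖z n‖ ^ 2) +
        ∑ n ∈ Finset.Icc 1 N, ‖dz n‖ ^ 2) :=
  stmt_0_general T hT N Δt hΔt z dz hdz
end

section
/- Let $\mathcal{H}$ and $W$ be real Hilbert spaces, $\{\varphi_k\}_{k=1}^{N+1}$ orthonormal in $\mathcal{H}$ with each $\varphi_k \in W$, and suppose the POD eigenvalues satisfy $\lambda_k = \beta \|\varphi_k\|_W^{-2} e^{-\gamma k}$ for all $k > r$ (with $\beta, \gamma > 0$) and $\lambda_1 \ge \cdots \ge \lambda_{N+1} > 0$. Define $u^n = (N+1)^{1/2}\lambda_{n+1}^{1/2}\varphi_{n+1}$ and let $P_r$ be the $\mathcal{H}$-orthogonal projection onto $\mathrm{span}\{\varphi_1,\dots,\varphi_r\}$. Then $\|u^r - P_r u^r\|_W^2 \ge \frac{\min\{1,\gamma\}}{2}(N+1)\sum_{k=r+1}^{N+1}\lambda_k \|\varphi_k\|_W^2$. -/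
/-!
The vector `u r` is a multiple of `φ (r + 1)`, which is orthogonal to `φ 1, …, φ r`, so the
projection error at index `r` is `u r` itself and `‖J (u r)‖² = (N + 1) λ_{r+1} ‖J φ_{r+1}‖²`.
With `q = exp (-γ)` every term `λ_k ‖J φ_k‖²` of the tail equals `β q^k`, so the tail sum is a
geometric sum bounded by `β q^{r+1} / (1 - q)`, and `1 - q ≥ γ / (1 + γ) ≥ min 1 γ / 2`.
-/

open Finset Real

lemma min_one_div_two_le_one_sub_exp_neg {γ : ℝ} (hγ : 0 ≤ γ) :
    min 1 γ / 2 ≤ 1 - exp (-γ) := by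
  have hexp : exp (-γ) * (1 + γ) ≤ 1 := by
    calc exp (-γ) * (1 + γ) ≤ exp (-γ) * exp γ := by gcongr; linarith [add_one_le_exp γ]
      _ = 1 := by rw [← exp_add, neg_add_cancel, exp_zero]
  rcases le_total γ 1 with h | h
  · rw [min_eq_right h]; nlinarith [exp_pos (-γ)]
  · rw [min_eq_left h]; nlinarith [exp_pos (-γ)]

lemma sum_Icc_pow_mul_one_sub_le {q : ℝ} (hq : 0 ≤ q) (m n : ℕ) :
    (∑ k ∈ Icc m n, q ^ k) * (1 - q) ≤ q ^ m := by
  rcases le_or_gt m (n + 1) with hmn | hmn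
  · rw [← Ico_add_one_right_eq_Icc, geom_sum_Ico_mul_neg q hmn]
    linarith [pow_nonneg hq (n + 1)]
  · rw [Icc_eq_empty (by omega), sum_empty, zero_mul]
    positivity

lemma min_one_div_two_mul_sum_exp_neg_pow_le {γ : ℝ} (hγ : 0 ≤ γ) (m n : ℕ) :
    min 1 γ / 2 * ∑ k ∈ Icc m n, exp (-γ) ^ k ≤ exp (-γ) ^ m :=
  calc min 1 γ / 2 * ∑ k ∈ Icc m n, exp (-γ) ^ k
      ≤ (∑ k ∈ Icc m n, exp (-γ) ^ k) * (1 - exp (-γ)) := by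
        rw [mul_comm]
        exact mul_le_mul_of_nonneg_left (min_one_div_two_le_one_sub_exp_neg hγ)
          (sum_nonneg fun k _ => by positivity)
    _ ≤ exp (-γ) ^ m := sum_Icc_pow_mul_one_sub_le (exp_pos _).le m n

theorem stmt_6_general {H W : Type*} [NormedAddCommGroup H] [InnerProductSpace ℝ H]
    [NormedAddCommGroup W] [InnerProductSpace ℝ W]
    (J : H →ₗ[ℝ] W) (hJ : Function.Injective J)
    (N : ℕ) (φ : ℕ → H)
    (hφ : ∀ j ∈ Finset.Icc 1 (N + 1), ∀ k ∈ Finset.Icc 1 (N + 1),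
      (inner ℝ (φ j) (φ k) : ℝ) = if j = k then 1 else 0)
    (lam : ℕ → ℝ)
    (u : ℕ → H)
    (hu : ∀ n ≤ N, u n = (Real.sqrt ((N : ℝ) + 1) * Real.sqrt (lam (n + 1))) • φ (n + 1))
    (r : ℕ) (hr : r ≤ N)
    (β γ : ℝ) (hβ : 0 < β) (hγ : 0 < γ)
    (hlam : ∀ k, r < k → k ≤ N + 1 →
      lam k = β * (‖J (φ k)‖ ^ 2)⁻¹ * Real.exp (-γ * (k : ℝ)))
    (Pr : H →ₗ[ℝ] H)
    (hPr : ∀ x, Pr x = ∑ i ∈ Finset.Icc 1 r, (inner ℝ x (φ i) : ℝ) • φ i) :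
    ‖J (u r - Pr (u r))‖ ^ 2 ≥ (min 1 γ) / 2 * ((N : ℝ) + 1) *
      ∑ k ∈ Finset.Icc (r + 1) (N + 1), lam k * ‖J (φ k)‖ ^ 2 := by
  have hterm : ∀ k ∈ Icc (r + 1) (N + 1), lam k * ‖J (φ k)‖ ^ 2 = β * exp (-γ) ^ k := by
    intro k hk
    have hkI : k ∈ Icc 1 (N + 1) := by simp only [mem_Icc] at hk ⊢; omega
    have hφk : φ k ≠ 0 := fun h => by simpa [h] using hφ k hkI k hkI
    have hJφk : ‖J (φ k)‖ ≠ 0 := norm_ne_zero_iff.mpr fun h => hφk (hJ (h.trans J.map_zero.symm))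
    rw [hlam k (by simp only [mem_Icc] at hk; omega) (mem_Icc.mp hk).2, ← exp_nat_mul]
    field_simp
  have hr1 : r + 1 ∈ Icc 1 (N + 1) := mem_Icc.mpr ⟨by omega, by omega⟩
  have hPr_ur : Pr (u r) = 0 := by
    rw [hPr, hu r hr]
    refine sum_eq_zero fun i hi => ?_
    have hiI : i ∈ Icc 1 (N + 1) := by simp only [mem_Icc] at hi ⊢; omega
    rw [real_inner_smul_left, hφ (r + 1) hr1 i hiI, if_neg (by simp only [mem_Icc] at hi; omega),
      mul_zero, zero_smul]
  have hlam_nonneg : 0 ≤ lam (r + 1) := by rw [hlam (r + 1) (by omega) (by omega)]; positivity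
  have herror : ‖J (u r - Pr (u r))‖ ^ 2 = ((N : ℝ) + 1) * (lam (r + 1) * ‖J (φ (r + 1))‖ ^ 2) := by
    rw [hPr_ur, sub_zero, hu r hr, map_smul, norm_smul, mul_pow, norm_eq_abs, sq_abs, mul_pow,
      sq_sqrt (by positivity), sq_sqrt hlam_nonneg, mul_assoc]
  rw [herror, hterm (r + 1) (left_mem_Icc.mpr (by omega)), sum_congr rfl hterm, ← mul_sum, ge_iff_le]
  calc min 1 γ / 2 * ((N : ℝ) + 1) * (β * ∑ k ∈ Icc (r + 1) (N + 1), exp (-γ) ^ k)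
      = ((N : ℝ) + 1) * β * (min 1 γ / 2 * ∑ k ∈ Icc (r + 1) (N + 1), exp (-γ) ^ k) := by ring
    _ ≤ ((N : ℝ) + 1) * β * exp (-γ) ^ (r + 1) := by
      gcongr
      exact min_one_div_two_mul_sum_exp_neg_pow_le hγ.le _ _
    _ = ((N : ℝ) + 1) * (β * exp (-γ) ^ (r + 1)) := by ring

/-- Proposition 3.1 (second part): lower bound on the pointwise projection error at index r
for exponentially decaying POD eigenvalues. -/
theorem stmt_6 {H W : Type*} [NormedAddCommGroup H] [InnerProductSpace ℝ H]
    [NormedAddCommGroup W] [InnerProductSpace ℝ W]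
    (J : H →ₗ[ℝ] W) (hJ : Function.Injective J)
    (N : ℕ) (φ : ℕ → H)
    (hφ : ∀ j ∈ Finset.Icc 1 (N + 1), ∀ k ∈ Finset.Icc 1 (N + 1),
      (inner ℝ (φ j) (φ k) : ℝ) = if j = k then 1 else 0)
    (lam : ℕ → ℝ) (hpos : ∀ k ∈ Finset.Icc 1 (N + 1), 0 < lam k)
    (hmono : ∀ j k, 1 ≤ j → j ≤ k → k ≤ N + 1 → lam k ≤ lam j)
    (u : ℕ → H)
    (hu : ∀ n ≤ N, u n = (Real.sqrt ((N : ℝ) + 1) * Real.sqrt (lam (n + 1))) • φ (n + 1))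
    (r : ℕ) (hr : r ≤ N)
    (β γ : ℝ) (hβ : 0 < β) (hγ : 0 < γ)
    (hlam : ∀ k, r < k → k ≤ N + 1 →
      lam k = β * (‖J (φ k)‖ ^ 2)⁻¹ * Real.exp (-γ * (k : ℝ)))
    (Pr : H →ₗ[ℝ] H)
    (hPr : ∀ x, Pr x = ∑ i ∈ Finset.Icc 1 r, (inner ℝ x (φ i) : ℝ) • φ i) :
    ‖J (u r - Pr (u r))‖ ^ 2 ≥ (min 1 γ) / 2 * ((N : ℝ) + 1) *
      ∑ k ∈ Finset.Icc (r + 1) (N + 1), lam k * ‖J (φ k)‖ ^ 2 :=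
  stmt_6_general J hJ N φ hφ lam u hu r hr β γ hβ hγ hlam Pr hPr
end

section
/- Let $\mathcal{H}$ be a real Hilbert space, $\{u^n\}_{n=0}^N \subset \mathcal{H}$, $\Delta t = T/N$ with $T>0$, and $\partial u^n = (u^n-u^{n-1})/\Delta t$. Let $\{\lambda_i^{DQ}\}$ be the POD eigenvalues in $\mathcal{H}$ of the combined snapshot set $\{u^0,\dots,u^N,\partial u^1,\dots,\partial u^N\}$ with weight $(2N+1)^{-1}$, $s$ the number of positive eigenvalues, and $P_r$ the $\mathcal{H}$-orthogonal projection onto the span of the first $r$ modes. Then $\max_{0\le k\le N}\|u^k - P_r u^k\|_{\mathcal{H}}^2 \le 6\max\{1,T^2\}\sum_{i=r+1}^s \lambda_i^{DQ}$. -/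
/-!
Comparing `f k` with every `f n` through the telescoping sum of the increments, and bounding
that sum by Cauchy–Schwarz, gives the discrete Sobolev inequality
`(N + 1) ‖f k‖² ≤ 2 ∑ ‖f n‖² + 2 N (N + 1) ∑ ‖f n - f (n - 1)‖²`.
Applied to the projection errors `e n = u n - P_r u n`, whose increments are `Δt` times the
projection errors of the difference quotients (as `P_r` is linear), and with `Δt N = T`, it bounds
`‖e k‖²` by `6 max 1 T²` times the `(2N + 1)⁻¹`-weighted POD error, which is the eigenvalue tail.
-/

open Finset

section DiscreteSobolev

variable {E : Type*} [SeminormedAddCommGroup E]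

theorem norm_sub_le_sum_norm_sub_pred (f : ℕ → E) {N m k : ℕ} (hm : m ≤ N) (hk : k ≤ N) :
    ‖f k - f m‖ ≤ ∑ n ∈ Icc 1 N, ‖f n - f (n - 1)‖ := by
  wlog hmk : m ≤ k generalizing m k
  · rw [norm_sub_rev]
    exact this hk hm (le_of_not_ge hmk)
  calc ‖f k - f m‖ = dist (f m) (f k) := by rw [dist_comm, dist_eq_norm]
    _ ≤ ∑ i ∈ Ico m k, dist (f i) (f (i + 1)) := dist_le_Ico_sum_dist f hmk
    _ ≤ ∑ i ∈ range N, dist (f i) (f (i + 1)) :=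
        sum_le_sum_of_subset_of_nonneg (by grind) fun _ _ _ ↦ dist_nonneg
    _ = ∑ n ∈ Icc 1 N, ‖f n - f (n - 1)‖ := by
        simp only [dist_eq_norm']
        rw [range_eq_Ico, ← Ico_add_one_right_eq_Icc]
        exact sum_Ico_add' (fun n ↦ ‖f n - f (n - 1)‖) 0 N 1

theorem sq_norm_le_discrete_sobolev (f : ℕ → E) {N k : ℕ} (hk : k ≤ N) :
    (N + 1) * ‖f k‖ ^ 2 ≤ 2 * ∑ n ∈ range (N + 1), ‖f n‖ ^ 2
      + 2 * (N + 1) * N * ∑ n ∈ Icc 1 N, ‖f n - f (n - 1)‖ ^ 2 := by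
  set D := ∑ n ∈ Icc 1 N, ‖f n - f (n - 1)‖
  have hpointwise : ∀ n ∈ range (N + 1), ‖f k‖ ^ 2 ≤ 2 * ‖f n‖ ^ 2 + 2 * D ^ 2 := by
    intro n hn
    have hD : ‖f k‖ ≤ ‖f n‖ + D := (norm_le_norm_add_norm_sub' _ _).trans <| by
      gcongr; exact norm_sub_le_sum_norm_sub_pred f (Nat.lt_succ_iff.mp (mem_range.mp hn)) hk
    nlinarith [add_sq_le (a := ‖f n‖) (b := D), norm_nonneg (f k)]
  have hCS : D ^ 2 ≤ N * ∑ n ∈ Icc 1 N, ‖f n - f (n - 1)‖ ^ 2 := by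
    simpa using sq_sum_le_card_mul_sum_sq (s := Icc 1 N) (f := fun n ↦ ‖f n - f (n - 1)‖)
  have := sum_le_sum hpointwise
  simp only [sum_const, card_range, nsmul_eq_mul, sum_add_distrib, ← mul_sum] at this
  push_cast at this
  nlinarith

end DiscreteSobolev

theorem sq_norm_le_of_sub_pred_eq_smul {E : Type*} [SeminormedAddCommGroup E] [NormedSpace ℝ E]
    {f g : ℕ → E} {N k : ℕ} {τ : ℝ} (hfg : ∀ n ∈ Icc 1 N, f n - f (n - 1) = τ • g n)
    (hk : k ≤ N) :
    ‖f k‖ ^ 2 ≤ 6 * max 1 ((τ * N) ^ 2) * (1 / (2 * (N : ℝ) + 1) *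
      ((∑ n ∈ range (N + 1), ‖f n‖ ^ 2) + ∑ n ∈ Icc 1 N, ‖g n‖ ^ 2)) := by
  set A := ∑ n ∈ range (N + 1), ‖f n‖ ^ 2
  set B := ∑ n ∈ Icc 1 N, ‖g n‖ ^ 2
  have hdiff : ∑ n ∈ Icc 1 N, ‖f n - f (n - 1)‖ ^ 2 = τ ^ 2 * B := by
    rw [mul_sum]
    refine sum_congr rfl fun n hn ↦ ?_
    rw [hfg n hn, norm_smul, mul_pow, Real.norm_eq_abs, sq_abs]
  have hsob : (N + 1) * ‖f k‖ ^ 2 ≤ 2 * A + 2 * (N + 1) * N * (τ ^ 2 * B) :=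
    hdiff ▸ sq_norm_le_discrete_sobolev f hk
  set M := max 1 ((τ * N) ^ 2)
  have hτM : (2 * N + 1) * N * τ ^ 2 ≤ 3 * M := by
    have hN : (2 * N + 1) * N ≤ 3 * (N : ℝ) ^ 2 := by
      rcases Nat.eq_zero_or_pos N with h | h
      · simp [h]
      · have : (1 : ℝ) ≤ N := by exact_mod_cast h
        nlinarith
    calc (2 * N + 1) * N * τ ^ 2 ≤ 3 * (N : ℝ) ^ 2 * τ ^ 2 := by gcongr
      _ = 3 * (τ * N) ^ 2 := by ring
      _ ≤ 3 * M := by gcongr; exact le_max_right _ _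
  have hA : 2 * (2 * N + 1) * A ≤ 6 * (N + 1) * M * A := by
    have hM : (1 : ℝ) ≤ M := le_max_left _ _
    have : 2 * (2 * N + 1) ≤ 6 * (N + 1) * M := by nlinarith
    exact mul_le_mul_of_nonneg_right this (by positivity)
  have hB : 2 * (N + 1) * ((2 * N + 1) * N * τ ^ 2) * B ≤ 6 * (N + 1) * M * B := by
    calc _ ≤ 2 * (N + 1) * (3 * M) * B := by gcongr
      _ = _ := by ring
  rw [one_div_mul_eq_div, ← mul_div_assoc, le_div_iff₀ (by positivity)]
  refine le_of_mul_le_mul_left ?_ (by positivity : (0 : ℝ) < N + 1)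
  nlinarith

theorem stmt_11_general {H : Type*} [NormedAddCommGroup H] [InnerProductSpace ℝ H]
    (T : ℝ) (hT : 0 < T) (N : ℕ) (Δt : ℝ) (hΔt : Δt = T / N)
    (u du : ℕ → H)
    (hdu : ∀ n, 1 ≤ n → n ≤ N → du n = (Δt)⁻¹ • (u n - u (n - 1)))
    (s r : ℕ) (lam : ℕ → ℝ) (Pr : H →ₗ[ℝ] H)
    (hPOD : (1 / (2 * (N : ℝ) + 1)) *
        ((∑ n ∈ Finset.range (N + 1), ‖u n - Pr (u n)‖ ^ 2)
          + ∑ n ∈ Finset.Icc 1 N, ‖du n - Pr (du n)‖ ^ 2)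
      = ∑ i ∈ Finset.Icc (r + 1) s, lam i) :
    ∀ k ≤ N, ‖u k - Pr (u k)‖ ^ 2
      ≤ 6 * max 1 (T ^ 2) * ∑ i ∈ Finset.Icc (r + 1) s, lam i := by
  intro k hk
  have hstep : ∀ n ∈ Icc 1 N,
      (u n - Pr (u n)) - (u (n - 1) - Pr (u (n - 1))) = Δt • (du n - Pr (du n)) := by
    intro n hn
    obtain ⟨h1, h2⟩ := mem_Icc.mp hn
    have hΔt0 : Δt ≠ 0 := by rw [hΔt]; exact div_ne_zero hT.ne' (Nat.cast_ne_zero.mpr (by omega))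
    have hu : u n - u (n - 1) = Δt • du n := by rw [hdu n h1 h2, smul_inv_smul₀ hΔt0]
    rw [smul_sub, ← hu, ← map_smul, ← hu, map_sub]
    abel
  have hτT : (Δt * N) ^ 2 ≤ T ^ 2 := by
    rcases Nat.eq_zero_or_pos N with h | h
    · simpa [h] using sq_nonneg T
    · rw [hΔt, div_mul_cancel₀ _ (Nat.cast_ne_zero.mpr h.ne')]
  rw [← hPOD]
  calc ‖u k - Pr (u k)‖ ^ 2 ≤ 6 * max 1 ((Δt * N) ^ 2) * _ :=
        sq_norm_le_of_sub_pred_eq_smul hstep hk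
    _ ≤ _ := by gcongr

/-- Theorem 3.1, eq. (3.18a): the DQ POD basis satisfies the uniform pointwise projection
error bound in the norm of the POD Hilbert space. -/
theorem stmt_11 {H : Type*} [NormedAddCommGroup H] [InnerProductSpace ℝ H]
    (T : ℝ) (hT : 0 < T) (N : ℕ) (hN : 1 ≤ N) (Δt : ℝ) (hΔt : Δt = T / N)
    (u du : ℕ → H)
    (hdu : ∀ n, 1 ≤ n → n ≤ N → du n = (Δt)⁻¹ • (u n - u (n - 1)))
    (s r : ℕ) (lam : ℕ → ℝ) (Pr : H →ₗ[ℝ] H)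
    (hPOD : (1 / (2 * (N : ℝ) + 1)) *
        ((∑ n ∈ Finset.range (N + 1), ‖u n - Pr (u n)‖ ^ 2)
          + ∑ n ∈ Finset.Icc 1 N, ‖du n - Pr (du n)‖ ^ 2)
      = ∑ i ∈ Finset.Icc (r + 1) s, lam i) :
    ∀ k ≤ N, ‖u k - Pr (u k)‖ ^ 2
      ≤ 6 * max 1 (T ^ 2) * ∑ i ∈ Finset.Icc (r + 1) s, lam i :=
  stmt_11_general T hT N Δt hΔt u du hdu s r lam Pr hPOD
end
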